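/- arXiv:2207.02568 — 3 statements merged into one kernel-verified Lean document; each statement's English description precedes it below -/
import Mathlib

section
/- Let θ ∈ ℝ and let f : ℝ → ℂ be continuous with compact support contained in (0, ∞). Then ∫_{t ∈ ℝ} ‖M f(−θ + i·t)‖² dt = 2π · ∫_{x ∈ (0, ∞)} ‖f(x)‖² · x^{−2θ−1} dx. In other words, up to the factor √(2π), the Mellin transform is an isometry from the weighted space x^θ L²((0,∞), dx/x) into L² of the vertical line Γ_{−θ} = {ζ ∈ ℂ : Re ζ = −θ}. -/
/-!
Under `x = e^{-u}` the Mellin transform on the line `Re s = σ` becomes the Fourier transform of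
`G u = e^{-σu} f(e^{-u})` at `t / 2π`, so the identity is Plancherel's theorem for `G` after
rescaling `t`; the same substitution, with its Jacobian `e^{-u}`, turns `∫ ‖G‖²` into the weighted
integral of `‖f‖²`. Mathlib's Plancherel theorem concerns the `L²` Fourier transform; for
`G ∈ L¹ ∩ L²` it agrees a.e. with the Fourier integral because both define the same tempered
distribution.
-/

open MeasureTheory Set

open scoped FourierTransform

theorem MeasureTheory.L2.norm_sq_eq_integral_norm_sq {α H : Type*} [MeasurableSpace α]
    {μ : Measure α} [NormedAddCommGroup H] [InnerProductSpace ℂ H] (u : Lp H 2 μ) :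
    ‖u‖ ^ 2 = ∫ a, ‖u a‖ ^ 2 ∂μ := by
  rw [@norm_sq_eq_re_inner ℂ, L2.inner_def]
  simp_rw [inner_self_eq_norm_sq_to_K]
  norm_cast

section Plancherel

variable {V H : Type*} [NormedAddCommGroup V] [InnerProductSpace ℝ V] [FiniteDimensional ℝ V]
  [MeasurableSpace V] [BorelSpace V]
  [NormedAddCommGroup H] [InnerProductSpace ℂ H] [CompleteSpace H]

theorem MeasureTheory.MemLp.coeFn_fourier_toLp {f : V → H} (hf₂ : MemLp f 2)
    (hf₁ : Integrable f) : ((𝓕 (hf₂.toLp f) : Lp H 2 volume) : V → H) =ᵐ[volume] 𝓕 f := by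
  have hcont : Continuous (𝓕 f) := VectorFourier.fourierIntegral_continuous
    Real.continuous_fourierChar (innerSL ℝ).continuous₂ hf₁
  refine ae_eq_of_integral_contDiff_smul_eq ((Lp.memLp _).locallyIntegrable one_le_two)
    hcont.locallyIntegrable fun g hg hgs ↦ ?_
  set φ : SchwartzMap V ℂ := (hgs.comp_left Complex.ofReal_zero).toSchwartzMap
    (Complex.ofRealCLM.contDiff.comp hg)
  have hφ : ∀ x, φ x = g x := fun x ↦ rfl
  calc ∫ x, g x • (𝓕 (hf₂.toLp f) : Lp H 2 volume) x
      = Lp.toTemperedDistribution (𝓕 (hf₂.toLp f) : Lp H 2 volume) φ := by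
        simp only [Lp.toTemperedDistribution_apply, hφ, Complex.coe_smul]
    _ = Lp.toTemperedDistribution (hf₂.toLp f) (𝓕 φ) := by
        rw [← Lp.fourier_toTemperedDistribution_eq]
        rfl
    _ = ∫ x, 𝓕 φ x • f x := by
        rw [Lp.toTemperedDistribution_apply]
        exact integral_congr_ae (hf₂.coeFn_toLp.mono fun x hx ↦ by simp only [hx])
    _ = ∫ ξ, g ξ • 𝓕 f ξ := by
        simpa [hφ, Complex.coe_smul] using! VectorFourier.integral_fourierIntegral_smul_eq_flip
          (L := innerₗ V) Real.continuous_fourierChar continuous_inner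
          (φ.integrable (μ := volume)) hf₁

theorem MeasureTheory.MemLp.integral_norm_sq_fourier {f : V → H} (hf₂ : MemLp f 2)
    (hf₁ : Integrable f) : ∫ ξ, ‖𝓕 f ξ‖ ^ 2 = ∫ x, ‖f x‖ ^ 2 := calc
  ∫ ξ, ‖𝓕 f ξ‖ ^ 2 = ‖(𝓕 (hf₂.toLp f) : Lp H 2 volume)‖ ^ 2 := by
    rw [L2.norm_sq_eq_integral_norm_sq]
    exact integral_congr_ae ((hf₂.coeFn_fourier_toLp hf₁).mono fun ξ h ↦ by simp only [h])
  _ = ‖hf₂.toLp f‖ ^ 2 := by rw [Lp.norm_fourier_eq]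
  _ = ∫ x, ‖f x‖ ^ 2 := by
    rw [L2.norm_sq_eq_integral_norm_sq]
    exact integral_congr_ae (hf₂.coeFn_toLp.mono fun x h ↦ by simp only [h])

end Plancherel

section ExpSubstitution

open Real

variable {E : Type*} [NormedAddCommGroup E]

theorem integral_comp_exp [NormedSpace ℝ E] (g : ℝ → E) :
    ∫ u, exp u • g (exp u) = ∫ x in Ioi 0, g x := by
  rw [← range_exp, ← image_univ, integral_image_eq_integral_abs_deriv_smul MeasurableSet.univ
    (fun x _ ↦ (hasDerivAt_exp x).hasDerivWithinAt) exp_injective.injOn, Measure.restrict_univ]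
  simp [abs_of_pos (exp_pos _)]

theorem integral_norm_sq_exp_smul_comp_exp_neg [NormedSpace ℝ E] (f : ℝ → E) (σ : ℝ) :
    ∫ u : ℝ, ‖exp (-σ * u) • f (exp (-u))‖ ^ 2 =
      ∫ x in Ioi 0, ‖f x‖ ^ 2 * x ^ (2 * σ - 1) := by
  rw [← integral_comp_exp, ← integral_neg_eq_self]
  congr 1 with u
  rw [norm_smul, norm_of_nonneg (exp_pos _).le, smul_eq_mul, ← exp_mul, neg_neg, mul_pow,
    ← exp_nat_mul, mul_left_comm (exp u), ← exp_add]
  ring_nf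

theorem HasCompactSupport.comp_exp {f : ℝ → E} (hf : HasCompactSupport f)
    (hpos : tsupport f ⊆ Ioi 0) : HasCompactSupport fun u ↦ f (exp u) := by
  refine HasCompactSupport.intro
    (hf.image_of_continuousOn (continuousOn_log.mono fun x hx ↦ (hpos hx).ne')) fun u hu ↦ ?_
  by_contra h
  exact hu ⟨exp u, subset_tsupport f h, log_exp u⟩

end ExpSubstitution

open Real Complex in
theorem integral_norm_sq_mellin_vertical_line {H : Type*} [NormedAddCommGroup H]
    [InnerProductSpace ℂ H] [CompleteSpace H] {f : ℝ → H} {σ : ℝ}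
    (h₁ : Integrable fun u : ℝ ↦ rexp (-σ * u) • f (rexp (-u)))
    (h₂ : MemLp (fun u : ℝ ↦ rexp (-σ * u) • f (rexp (-u))) 2) :
    ∫ t : ℝ, ‖mellin f (σ + t * I)‖ ^ 2 =
      2 * π * ∫ x in Ioi 0, ‖f x‖ ^ 2 * x ^ (2 * σ - 1) := calc
  ∫ t : ℝ, ‖mellin f (σ + t * I)‖ ^ 2
      = ∫ t : ℝ, ‖𝓕 (fun u : ℝ ↦ rexp (-σ * u) • f (rexp (-u))) (t / (2 * π))‖ ^ 2 := by
    simp [mellin_eq_fourier]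
  _ = 2 * π * ∫ ξ : ℝ, ‖𝓕 (fun u : ℝ ↦ rexp (-σ * u) • f (rexp (-u))) ξ‖ ^ 2 := by
    rw [Measure.integral_comp_div
      (fun ξ ↦ ‖𝓕 (fun u : ℝ ↦ rexp (-σ * u) • f (rexp (-u))) ξ‖ ^ 2), smul_eq_mul,
      abs_of_pos two_pi_pos]
  _ = 2 * π * ∫ x in Ioi 0, ‖f x‖ ^ 2 * x ^ (2 * σ - 1) := by
    rw [h₂.integral_norm_sq_fourier h₁, integral_norm_sq_exp_smul_comp_exp_neg]

/-- Mellin–Plancherel isometry on the vertical line `Γ_{-θ}`: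
for continuous `f` compactly supported in `(0,∞)`,
`∫ ‖M f(-θ + i t)‖² dt = 2π ∫_{(0,∞)} ‖f x‖² x^{-2θ-1} dx`. -/
theorem mellin_plancherel_line (θ : ℝ) (f : ℝ → ℂ) (hf : Continuous f)
    (hsupp : HasCompactSupport f) (hpos : tsupport f ⊆ Set.Ioi (0 : ℝ)) :
    ∫ t : ℝ, ‖mellin f ((-θ : ℂ) + t * Complex.I)‖ ^ 2 =
      (2 * Real.pi) * ∫ x in Set.Ioi (0 : ℝ), ‖f x‖ ^ 2 * x ^ (-2 * θ - 1) := by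
  have hsupp' : HasCompactSupport fun u ↦ f (Real.exp (-u)) :=
    (hsupp.comp_exp hpos).comp_homeomorph (Homeomorph.neg ℝ)
  have hGs : HasCompactSupport fun u : ℝ ↦ Real.exp (-(-θ) * u) • f (Real.exp (-u)) :=
    hsupp'.smul_left (f := fun u : ℝ ↦ Real.exp (-(-θ) * u))
  have hG : Continuous fun u : ℝ ↦ Real.exp (-(-θ) * u) • f (Real.exp (-u)) := by fun_prop
  rw [show -2 * θ - 1 = 2 * -θ - 1 by ring]
  exact_mod_cast integral_norm_sq_mellin_vertical_line (hG.integrable_of_hasCompactSupport hGs)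
    (hG.memLp_of_hasCompactSupport hGs)
end

section
/- Let θ ∈ ℝ and let f : ℝ → ℂ be measurable with f(x) = 0 for all x ∉ (0,1], and suppose C² := ∫_{x ∈ (0,∞)} ‖f(x)‖² · x^{−2θ−1} dx < ∞. Then for every s ∈ ℂ with Re s > −θ, the Mellin integrand x ↦ x^{s−1} f(x) is integrable on (0,∞), and the Mellin transform satisfies the bound ‖M f(s)‖ ≤ (2(Re s + θ))^{−1/2} · C. -/
/-!
On `(0, 1]` split the Mellin integrand as
`‖x ^ (s - 1) f(x)‖ = x ^ (a - 1/2) · (x ^ (-θ - 1/2) ‖f(x)‖)` with `a = Re s + θ > 0`.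
The second factor is square integrable by hypothesis, with square integral `C²`, and the first
has square integral `∫₀¹ x ^ (2a - 1) dx = 1 / (2a)`; Cauchy–Schwarz gives both the
integrability and the bound.
-/

open MeasureTheory Set

section CauchySchwarz

variable {α E : Type*} [MeasurableSpace α] {μ : Measure α} [NormedAddCommGroup E]
  {g : α → E} {u v : α → ℝ}

theorem integrable_of_norm_le_mul_of_memLp_two (hg : AEStronglyMeasurable g μ)
    (hu : MemLp u 2 μ) (hv : MemLp v 2 μ) (hle : ∀ᵐ x ∂μ, ‖g x‖ ≤ u x * v x) :
    Integrable g μ :=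
  (hu.integrable_mul hv).mono' hg hle

theorem norm_integral_le_sqrt_mul_sqrt_of_norm_le_mul [NormedSpace ℝ E]
    (hu : MemLp u 2 μ) (hv : MemLp v 2 μ) (hle : ∀ᵐ x ∂μ, ‖g x‖ ≤ u x * v x) :
    ‖∫ x, g x ∂μ‖ ≤ √(∫ x, u x ^ 2 ∂μ) * √(∫ x, v x ^ 2 ∂μ) := by
  have holder := integral_mul_norm_le_Lp_mul_Lq Real.HolderConjugate.two_two
    (by simpa using hu) (by simpa using hv)
  simp only [Real.norm_eq_abs, Real.rpow_two, sq_abs] at holder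
  rw [Real.sqrt_eq_rpow, Real.sqrt_eq_rpow]
  calc ‖∫ x, g x ∂μ‖ ≤ ∫ x, ‖g x‖ ∂μ := norm_integral_le_integral_norm g
    _ ≤ ∫ x, |u x| * |v x| ∂μ := by
      refine integral_mono_of_nonneg (.of_forall fun x => norm_nonneg _) ?_ ?_
      · simpa only [Pi.mul_apply, abs_mul] using (hu.integrable_mul hv).abs
      · filter_upwards [hle] with x hx
        exact hx.trans ((le_abs_self _).trans (abs_mul _ _).le)
    _ ≤ _ := holder

end CauchySchwarz

section MellinSupport

variable {E : Type*} [NormedAddCommGroup E] [NormedSpace ℂ E] {f : ℝ → E} {s : ℂ} {t : Set ℝ}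

theorem mellinConvergent_of_integrableOn (hf : ∀ x ∉ t, f x = 0)
    (h : IntegrableOn (fun x : ℝ => (x : ℂ) ^ (s - 1) • f x) t) : MellinConvergent f s :=
  h.of_forall_sdiff_eq_zero measurableSet_Ioi fun x hx => by simp [hf x hx.2]

theorem mellin_eq_setIntegral (ht : t ⊆ Ioi 0) (hf : ∀ x ∉ t, f x = 0) :
    mellin f s = ∫ x in t, (x : ℂ) ^ (s - 1) • f x :=
  setIntegral_eq_of_subset_of_forall_sdiff_eq_zero measurableSet_Ioi ht
    fun x hx => by simp [hf x hx.2]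

end MellinSupport

theorem norm_ofReal_cpow_smul_eq {E : Type*} [NormedAddCommGroup E] [NormedSpace ℂ E] (θ : ℝ)
    {x : ℝ} (hx : 0 < x) (s : ℂ) (w : E) :
    ‖(x : ℂ) ^ (s - 1) • w‖ = x ^ (s.re + θ - 1 / 2) * (x ^ (-θ - 1 / 2) * ‖w‖) := by
  rw [norm_smul, Complex.norm_cpow_eq_rpow_re_of_pos hx, ← mul_assoc, ← Real.rpow_add hx]
  congr 2
  simp only [Complex.sub_re, Complex.one_re]
  ring

theorem rpow_sq_eq_rpow_two_mul {x : ℝ} (hx : 0 ≤ x) (r : ℝ) : (x ^ r) ^ 2 = x ^ (2 * r) := by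
  rw [← Real.rpow_mul_natCast hx, mul_comm]; norm_num

theorem integral_Ioc_zero_one_rpow_sq {a : ℝ} (ha : 0 < a) :
    ∫ x in Ioc 0 1, (x ^ (a - 1 / 2)) ^ 2 = 1 / (2 * a) := by
  rw [setIntegral_congr_fun measurableSet_Ioc fun x hx => rpow_sq_eq_rpow_two_mul hx.1.le _,
    ← intervalIntegral.integral_of_le zero_le_one, integral_rpow (.inl (by linarith))]
  norm_num [show 2 * (a - 1 / 2) + 1 = 2 * a by ring, ha.ne']

theorem memLp_two_Ioc_zero_one_rpow {a : ℝ} (ha : 0 < a) :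
    MemLp (fun x : ℝ => x ^ (a - 1 / 2)) 2 (volume.restrict (Ioc 0 1)) := by
  refine (memLp_two_iff_integrable_sq (by fun_prop)).2 ?_
  refine IntegrableOn.congr_fun ?_ (fun x hx => (rpow_sq_eq_rpow_two_mul hx.1.le _).symm)
    measurableSet_Ioc
  rw [← intervalIntegrable_iff_integrableOn_Ioc_of_le zero_le_one]
  exact intervalIntegral.intervalIntegrable_rpow' (by linarith)

section Weighted

variable {E : Type*} [NormedAddCommGroup E] {f : ℝ → E} (θ : ℝ)

theorem rpow_mul_norm_sq_eq {x : ℝ} (hx : 0 ≤ x) (w : E) :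
    (x ^ (-θ - 1 / 2) * ‖w‖) ^ 2 = ‖w‖ ^ 2 * x ^ (-2 * θ - 1) := by
  rw [mul_pow, rpow_sq_eq_rpow_two_mul hx, mul_comm]; ring_nf

theorem setIntegral_rpow_mul_norm_sq {t : Set ℝ} (ht : MeasurableSet t) (h : t ⊆ Ioi 0) :
    ∫ x in t, (x ^ (-θ - 1 / 2) * ‖f x‖) ^ 2 = ∫ x in t, ‖f x‖ ^ 2 * x ^ (-2 * θ - 1) :=
  setIntegral_congr_fun ht fun _ hx => rpow_mul_norm_sq_eq θ (h hx).le _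

theorem memLp_two_rpow_mul_norm (hf : AEStronglyMeasurable f (volume.restrict (Ioi 0)))
    (hint : IntegrableOn (fun x => ‖f x‖ ^ 2 * x ^ (-2 * θ - 1)) (Ioi 0)) :
    MemLp (fun x => x ^ (-θ - 1 / 2) * ‖f x‖) 2 (volume.restrict (Ioi 0)) := by
  refine (memLp_two_iff_integrable_sq (by fun_prop)).2 ?_
  exact hint.congr_fun (fun x hx => (rpow_mul_norm_sq_eq θ (le_of_lt hx) _).symm) measurableSet_Ioi

end Weighted

/-- If `f` is measurable, supported in `(0,1]`, and lies in the weighted space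
`x^θ L²((0,∞), dx/x)` with norm `C`, then for `Re s > -θ` the Mellin integrand is
integrable and `‖M f(s)‖ ≤ (2(Re s + θ))^{-1/2} C`. -/
theorem mellin_bound_of_weighted_L2 (θ : ℝ) (f : ℝ → ℂ) (hmeas : Measurable f)
    (hsupp : ∀ x : ℝ, x ∉ Set.Ioc (0 : ℝ) 1 → f x = 0)
    (hint : IntegrableOn (fun x : ℝ => ‖f x‖ ^ 2 * x ^ (-2 * θ - 1)) (Set.Ioi 0)) :
    ∀ s : ℂ, -θ < s.re →
      MellinConvergent f s ∧
      ‖mellin f s‖ ≤ (2 * (s.re + θ)) ^ (-(1 / 2) : ℝ) *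
        Real.sqrt (∫ x in Set.Ioi (0 : ℝ), ‖f x‖ ^ 2 * x ^ (-2 * θ - 1)) := by
  intro s hs
  have ha : 0 < s.re + θ := by linarith
  have hIoc : Ioc (0 : ℝ) 1 ⊆ Ioi 0 := Ioc_subset_Ioi_self
  have hu := memLp_two_Ioc_zero_one_rpow ha
  have hv : MemLp (fun x => x ^ (-θ - 1 / 2) * ‖f x‖) 2 (volume.restrict (Ioc 0 1)) :=
    (memLp_two_rpow_mul_norm θ hmeas.aestronglyMeasurable hint).mono_measure
      (Measure.restrict_mono hIoc le_rfl)
  have hsplit : ∀ᵐ x : ℝ ∂volume.restrict (Ioc 0 1),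
      ‖(x : ℂ) ^ (s - 1) • f x‖ ≤ x ^ (s.re + θ - 1 / 2) * (x ^ (-θ - 1 / 2) * ‖f x‖) :=
    (ae_restrict_mem measurableSet_Ioc).mono fun x hx => (norm_ofReal_cpow_smul_eq θ hx.1 s _).le
  refine ⟨mellinConvergent_of_integrableOn hsupp
    (integrable_of_norm_le_mul_of_memLp_two (by fun_prop) hu hv hsplit), ?_⟩
  rw [mellin_eq_setIntegral hIoc hsupp,
    setIntegral_eq_of_subset_of_forall_sdiff_eq_zero measurableSet_Ioi hIoc
      fun x hx => by simp [hsupp x hx.2]]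
  refine (norm_integral_le_sqrt_mul_sqrt_of_norm_le_mul hu hv hsplit).trans_eq ?_
  rw [integral_Ioc_zero_one_rpow_sq ha, setIntegral_rpow_mul_norm_sq θ measurableSet_Ioc hIoc,
    Real.sqrt_eq_rpow, one_div, Real.inv_rpow (by positivity), ← Real.rpow_neg (by positivity)]
end

section
/- Let θ ∈ ℝ and let f : ℝ → ℂ be measurable with f(x) = 0 for all x ∉ (0,1], and suppose ∫_{x ∈ (0,∞)} ‖f(x)‖² · x^{−2θ−1} dx < ∞. Then the Mellin transform s ↦ M f(s) is complex differentiable (holomorphic) at every point s of the open half-plane {s ∈ ℂ : Re s > −θ}. -/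
/- A function supported in `(0, 1]` whose Mellin integral converges absolutely at `b` has a
holomorphic Mellin transform on `re s > b`: on `(0, 1]` the kernel `t ^ (s - 1)` only improves as
`re s` grows, and the `log t` produced by differentiating in `s` costs an arbitrarily small power
of `t`. Membership in `x ^ θ L²(dx / x)` gives absolute convergence at every `b > -θ`, by
`t ^ (b - 1) ‖f t‖ = (‖f t‖ t ^ (-θ - 1/2)) · t ^ (b + θ - 1/2)` and AM-GM, since
`t ^ (2 (b + θ) - 1)` is integrable on `(0, 1]`. -/

open MeasureTheory Set
open Filter Complex

lemma Real.rpow_add_mul_le {t : ℝ} (ht : 0 < t) (a α β : ℝ) :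
    t ^ (α + β) * a ≤ (a ^ 2 * t ^ (2 * α) + t ^ (2 * β)) / 2 := by
  have hsq : ∀ γ : ℝ, (t ^ γ) ^ 2 = t ^ (2 * γ) := fun γ => by
    rw [← Real.rpow_two, ← Real.rpow_mul ht.le, mul_comm]
  have := two_mul_le_add_sq (a * t ^ α) (t ^ β)
  rw [mul_pow, hsq, hsq] at this
  rw [Real.rpow_add ht]
  linarith

lemma Real.abs_log_le_rpow_neg_div {t δ : ℝ} (ht₀ : 0 < t) (ht₁ : t ≤ 1) (hδ : 0 < δ) :
    |Real.log t| ≤ t ^ (-δ) / δ := by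
  have := Real.log_le_rpow_div (inv_nonneg.2 ht₀.le) hδ
  rwa [Real.log_inv, Real.inv_rpow ht₀.le, ← Real.rpow_neg ht₀.le,
    ← abs_of_nonpos (Real.log_nonpos ht₀.le ht₁)] at this

lemma norm_ofReal_cpow_mul_log_le {t : ℝ} (ht₀ : 0 < t) (ht₁ : t ≤ 1) {b δ : ℝ} (hδ : 0 < δ)
    {z : ℂ} (hz : b + δ ≤ z.re) :
    ‖(t : ℂ) ^ (z - 1) * (Real.log t : ℂ)‖ ≤ t ^ (b - 1) / δ :=
  calc ‖(t : ℂ) ^ (z - 1) * (Real.log t : ℂ)‖ = t ^ (z.re - 1) * |Real.log t| := by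
        rw [norm_mul, norm_cpow_eq_rpow_re_of_pos ht₀, sub_re, one_re, norm_real,
          Real.norm_eq_abs]
    _ ≤ t ^ (b + δ - 1) * (t ^ (-δ) / δ) :=
        mul_le_mul (Real.rpow_le_rpow_of_exponent_ge ht₀ ht₁ (by linarith))
          (Real.abs_log_le_rpow_neg_div ht₀ ht₁ hδ) (abs_nonneg _) (by positivity)
    _ = t ^ (b - 1) / δ := by
        rw [mul_div_assoc', ← Real.rpow_add ht₀]
        ring_nf

lemma hasDerivAt_ofReal_cpow_sub_one {t : ℝ} (ht : 0 < t) (z : ℂ) :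
    HasDerivAt (fun w : ℂ => (t : ℂ) ^ (w - 1)) ((t : ℂ) ^ (z - 1) * (Real.log t : ℂ)) z := by
  convert ((hasDerivAt_id' z).sub_const 1).const_cpow
    (Or.inl (ofReal_ne_zero.2 ht.ne')) using 1
  rw [ofReal_log ht.le]
  ring

section SupportedInUnitInterval

variable {E : Type*} [NormedAddCommGroup E] {f : ℝ → E}

lemma integrableOn_rpow_mul_norm_of_le (hfc : AEStronglyMeasurable f (volume.restrict (Ioi 0)))
    (hf_top : ∀ t, 1 < t → f t = 0) {b σ : ℝ}
    (hb : IntegrableOn (fun t : ℝ => t ^ (b - 1) * ‖f t‖) (Ioi 0)) (hbσ : b ≤ σ) :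
    IntegrableOn (fun t : ℝ => t ^ (σ - 1) * ‖f t‖) (Ioi 0) := by
  refine hb.mono' ((continuousOn_id.rpow_const fun t ht => Or.inl (ne_of_gt ht)
    ).aestronglyMeasurable measurableSet_Ioi |>.mul hfc.norm) ?_
  filter_upwards [ae_restrict_mem measurableSet_Ioi] with t (ht₀ : 0 < t)
  rcases le_or_gt t 1 with ht₁ | ht₁
  · rw [Real.norm_of_nonneg (by positivity)]
    gcongr ?_ * _
    exact Real.rpow_le_rpow_of_exponent_ge ht₀ ht₁ (by linarith)
  · simp [hf_top t ht₁]

lemma integrableOn_rpow_mul_norm_of_weighted_sq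
    (hfc : AEStronglyMeasurable f (volume.restrict (Ioi 0))) (hf_top : ∀ t, 1 < t → f t = 0)
    {θ σ : ℝ} (hint : IntegrableOn (fun t : ℝ => ‖f t‖ ^ 2 * t ^ (-2 * θ - 1)) (Ioi 0))
    (hσ : -θ < σ) :
    IntegrableOn (fun t : ℝ => t ^ (σ - 1) * ‖f t‖) (Ioi 0) := by
  have hpow : IntegrableOn (fun t : ℝ => t ^ (2 * (σ + θ) - 1)) (Ioc 0 1) := by
    rw [← intervalIntegrable_iff_integrableOn_Ioc_of_le zero_le_one]
    exact intervalIntegral.intervalIntegrable_rpow' (by linarith)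
  have hIoc : IntegrableOn (fun t : ℝ => t ^ (σ - 1) * ‖f t‖) (Ioc 0 1) := by
    refine (((hint.mono_set Ioc_subset_Ioi_self).add hpow).div_const 2).mono'
      ((continuousOn_id.rpow_const fun t ht => Or.inl (ne_of_gt ht.1)).aestronglyMeasurable
        measurableSet_Ioc |>.mul (hfc.mono_set Ioc_subset_Ioi_self).norm) ?_
    filter_upwards [ae_restrict_mem measurableSet_Ioc] with t ht
    rw [Real.norm_of_nonneg (by have := ht.1; positivity), Pi.add_apply]
    convert Real.rpow_add_mul_le ht.1 ‖f t‖ (-θ - 1 / 2) (σ + θ - 1 / 2) using 3 <;> ring_nf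
  refine hIoc.of_forall_sdiff_eq_zero measurableSet_Ioi fun t ht => ?_
  simp [hf_top t (lt_of_not_ge fun h => ht.2 ⟨ht.1, h⟩)]

variable [NormedSpace ℂ E]

theorem mellin_differentiableAt_of_integrableOn_rpow_mul_norm
    (hfc : AEStronglyMeasurable f (volume.restrict (Ioi 0))) (hf_top : ∀ t, 1 < t → f t = 0)
    {b : ℝ} (hb : IntegrableOn (fun t : ℝ => t ^ (b - 1) * ‖f t‖) (Ioi 0)) {s : ℂ}
    (hbs : b < s.re) :
    DifferentiableAt ℂ (mellin f) s := by
  obtain ⟨δ, hδ, hbδ⟩ : ∃ δ : ℝ, 0 < δ ∧ b + 2 * δ = s.re :=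
    ⟨(s.re - b) / 2, by linarith, by ring⟩
  set F : ℂ → ℝ → E := fun z t => (t : ℂ) ^ (z - 1) • f t
  set F' : ℂ → ℝ → E := fun z t => ((t : ℂ) ^ (z - 1) * (Real.log t : ℂ)) • f t
  have hcpow : ∀ z : ℂ, ContinuousOn (fun t : ℝ => (t : ℂ) ^ (z - 1)) (Ioi 0) := fun z =>
    continuousOn_of_forall_continuousAt fun t ht =>
      continuousAt_ofReal_cpow_const _ _ (Or.inr (ne_of_gt ht))
  have hF_meas : ∀ z, AEStronglyMeasurable (F z) (volume.restrict (Ioi 0)) := fun z =>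
    ((hcpow z).aestronglyMeasurable measurableSet_Ioi).smul hfc
  have hF_int : IntegrableOn (F s) (Ioi 0) :=
    (mellin_convergent_iff_norm subset_rfl measurableSet_Ioi hfc).2
      (integrableOn_rpow_mul_norm_of_le hfc hf_top hb hbs.le)
  have hF'_meas : AEStronglyMeasurable (F' s) (volume.restrict (Ioi 0)) :=
    (((hcpow s).mul (continuous_ofReal.comp_continuousOn
      (Real.continuousOn_log.mono fun t ht => ne_of_gt ht))).aestronglyMeasurable
        measurableSet_Ioi).smul hfc
  have h_bound : ∀ᵐ t ∂volume.restrict (Ioi 0), ∀ z ∈ Metric.ball s δ,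
      ‖F' z t‖ ≤ t ^ (b - 1) * ‖f t‖ / δ := by
    filter_upwards [ae_restrict_mem measurableSet_Ioi] with t (ht₀ : 0 < t) z hz
    rcases le_or_gt t 1 with ht₁ | ht₁
    · have hz_re : b + δ ≤ z.re := by
        have := (abs_re_le_norm (z - s)).trans (mem_ball_iff_norm.1 hz).le
        rw [sub_re] at this
        linarith [abs_le.1 this]
      rw [norm_smul, mul_div_right_comm]
      gcongr
      exact norm_ofReal_cpow_mul_log_le ht₀ ht₁ hδ hz_re
    · simp [F', hf_top t ht₁]
  have h_diff : ∀ᵐ t ∂volume.restrict (Ioi 0), ∀ z ∈ Metric.ball s δ,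
      HasDerivAt (F · t) (F' z t) z := by
    filter_upwards [ae_restrict_mem measurableSet_Ioi] with t (ht : 0 < t) z _
    exact (hasDerivAt_ofReal_cpow_sub_one ht z).smul_const (f t)
  exact (hasDerivAt_integral_of_dominated_loc_of_deriv_le (Metric.ball_mem_nhds s hδ)
    (Eventually.of_forall hF_meas) hF_int hF'_meas h_bound (hb.div_const δ)
    h_diff).2.differentiableAt

end SupportedInUnitInterval

/-- If `f` is measurable, supported in `(0,1]`, and lies in the weighted space
`x^θ L²((0,∞), dx/x)`, then its Mellin transform is holomorphic on the half-plane
`Re s > -θ`. -/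
theorem mellin_holomorphic_of_weighted_L2 (θ : ℝ) (f : ℝ → ℂ) (hmeas : Measurable f)
    (hsupp : ∀ x : ℝ, x ∉ Set.Ioc (0 : ℝ) 1 → f x = 0)
    (hint : IntegrableOn (fun x : ℝ => ‖f x‖ ^ 2 * x ^ (-2 * θ - 1)) (Set.Ioi 0)) :
    ∀ s : ℂ, -θ < s.re → DifferentiableAt ℂ (mellin f) s := by
  intro s hs
  obtain ⟨b, hθb, hbs⟩ := exists_between hs
  have hfc : AEStronglyMeasurable f (volume.restrict (Ioi 0)) := hmeas.aestronglyMeasurable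
  have hf_top : ∀ t, 1 < t → f t = 0 := fun t ht => hsupp t fun h => ht.not_ge h.2
  exact mellin_differentiableAt_of_integrableOn_rpow_mul_norm hfc hf_top
    (integrableOn_rpow_mul_norm_of_weighted_sq hfc hf_top hint hθb) hbs
end
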